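/- Let (P,Q) be a quasi-projection pair of bounded linear operators on a complex Hilbert space H, with T₁ = P(I−Q), T₂ = (I−P)Q, H₁ = ran(P) ∩ ran(Q), H₄ = ker(P) ∩ ker(Q), and let V₁, V₂ be bounded operators on H such that T₁ = V₁|T₁| with V₁*V₁ = P_{cl ran(T₁*)} and T₂ = V₂|T₂| with V₂*V₂ = P_{cl ran(T₂*)}. Then P_{H₁}(P − P_{H₁}) = 0, (I−Q−P_{H₄})P_{H₁} = 0, P_{H₄}(P − P_{H₁}) = 0, (I−Q−P_{H₄})P_{H₄} = 0; and for all complex numbers λ₁, λ₂, the equation (λ₁V₁ − λ₂V₂)(P − P_{H₁}) = (I−Q−P_{H₄})(λ₁V₁ − λ₂V₂) holds if and only if λ₁V₁T₁ = λ₁T₁V₁, λ₁V₁T₂ = λ₂T₁V₂, λ₂V₂T₁ = λ₁T₂V₁ and λ₂V₂T₂ = λ₂T₂V₂. -/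

import Mathlib

set_option linter.unusedSectionVars false
set_option synthInstance.maxHeartbeats 1000000
set_option maxHeartbeats 2000000

noncomputable section

open ContinuousLinearMap

variable {H : Type*} [NormedAddCommGroup H] [InnerProductSpace ℂ H] [CompleteSpace H]

/-- The orthogonal projection onto a closed subspace `K` of `H`, regarded as a bounded
operator on `H`. -/
def projOn (K : Submodule ℂ H) (hK : IsClosed (K : Set H)) : H →L[ℂ] H :=
  haveI : CompleteSpace K := hK.completeSpace_coe
  K.subtypeL ∘L K.orthogonalProjection

theorem range_eq_ker_of_idem (T : H →L[ℂ] H) (h : T * T = T) :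
    LinearMap.range (T : H →ₗ[ℂ] H) = LinearMap.ker ((1 - T : H →L[ℂ] H) : H →ₗ[ℂ] H) := by
  ext x
  constructor
  · rintro ⟨y, rfl⟩
    have hy : T (T y) = T y := congrFun (congrArg DFunLike.coe h) y
    simp [LinearMap.mem_ker, hy]
  · intro hx
    have hx' : x - T x = 0 := by
      have := LinearMap.mem_ker.mp hx
      simpa using this
    exact ⟨x, (sub_eq_zero.mp hx').symm⟩

theorem isClosed_range_of_idem (T : H →L[ℂ] H) (h : T * T = T) :
    IsClosed ((LinearMap.range (T : H →ₗ[ℂ] H) : Submodule ℂ H) : Set H) := by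
  rw [range_eq_ker_of_idem T h]
  exact ContinuousLinearMap.isClosed_ker _

theorem isClosed_inf {K L : Submodule ℂ H} (hK : IsClosed (K : Set H))
    (hL : IsClosed (L : Set H)) : IsClosed ((K ⊓ L : Submodule ℂ H) : Set H) := by
  rw [Submodule.coe_inf]
  exact hK.inter hL

/-- The orthogonal projection onto the closure of the range of an operator. -/
def projCl (T : H →L[ℂ] H) : H →L[ℂ] H :=
  projOn (LinearMap.range (T : H →ₗ[ℂ] H)).topologicalClosure
    (Submodule.isClosed_topologicalClosure _)

local notation "⟪" x ", " y "⟫" => @inner ℂ _ _ x y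

theorem projOn_mem (K : Submodule ℂ H) (hK : IsClosed (K : Set H)) (x : H) :
    projOn K hK x ∈ K := by
  haveI : CompleteSpace K := hK.completeSpace_coe
  exact (K.orthogonalProjection x).2

theorem projOn_eq_self (K : Submodule ℂ H) (hK : IsClosed (K : Set H)) {x : H} (hx : x ∈ K) :
    projOn K hK x = x := by
  haveI : CompleteSpace K := hK.completeSpace_coe
  exact Submodule.starProjection_eq_self_iff.mpr hx

theorem projOn_eq_zero (K : Submodule ℂ H) (hK : IsClosed (K : Set H)) {x : H} (hx : x ∈ Kᗮ) :
    projOn K hK x = 0 := by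
  haveI : CompleteSpace K := hK.completeSpace_coe
  show ((K.orthogonalProjectionOnto x : K) : H) = 0
  rw [Submodule.orthogonalProjectionOnto_apply_of_mem_orthogonal hx]; rfl

theorem projOn_idem (K : Submodule ℂ H) (hK : IsClosed (K : Set H)) :
    projOn K hK * projOn K hK = projOn K hK := by
  ext x
  exact projOn_eq_self K hK (projOn_mem K hK x)

theorem projOn_adjoint (K : Submodule ℂ H) (hK : IsClosed (K : Set H)) :
    ContinuousLinearMap.adjoint (projOn K hK) = projOn K hK := by
  haveI : CompleteSpace K := hK.completeSpace_coe
  exact (isSelfAdjoint_starProjection K).adjoint_eq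

theorem projOn_congr {K K' : Submodule ℂ H} (hKK : K = K') {h1 : IsClosed (K : Set H)}
    {h2 : IsClosed (K' : Set H)} : projOn K h1 = projOn K' h2 := by
  subst hKK; rfl

theorem apply_eq {A B : H →L[ℂ] H} (h : A = B) (x : H) : A x = B x := by rw [h]

section PI
variable (T V : H →L[ℂ] H)

theorem sqrt_sa : ContinuousLinearMap.adjoint (CFC.sqrt (ContinuousLinearMap.adjoint T * T))
    = CFC.sqrt (ContinuousLinearMap.adjoint T * T) := by
  rw [← ContinuousLinearMap.star_eq_adjoint]
  exact (IsSelfAdjoint.of_nonneg (CFC.sqrt_nonneg _))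

variable (hV : T = V * CFC.sqrt (ContinuousLinearMap.adjoint T * T))
  (hVp : ContinuousLinearMap.adjoint V * V = projCl (ContinuousLinearMap.adjoint T))

include hV in
theorem adjoint_T_eq : ContinuousLinearMap.adjoint T
    = CFC.sqrt (ContinuousLinearMap.adjoint T * T) * ContinuousLinearMap.adjoint V := by
  have h := congrArg star hV
  rw [star_mul, ContinuousLinearMap.star_eq_adjoint, ContinuousLinearMap.star_eq_adjoint,
    ContinuousLinearMap.star_eq_adjoint, sqrt_sa T] at h
  exact h

include hVp in
theorem V_mul_E : V * (ContinuousLinearMap.adjoint V * V) = V := by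
  have hidem : (ContinuousLinearMap.adjoint V * V) * (ContinuousLinearMap.adjoint V * V)
      = ContinuousLinearMap.adjoint V * V := by rw [hVp]; exact projOn_idem _ _
  ext x
  simp only [ContinuousLinearMap.mul_apply]
  have key : ∀ u : H, (ContinuousLinearMap.adjoint V) (V u) = 0 → V u = 0 := by
    intro u hu
    have h1 : ⟪V u, V u⟫ = 0 := by
      rw [← ContinuousLinearMap.adjoint_inner_right, hu, inner_zero_right]
    exact inner_self_eq_zero.mp h1
  have hu : (ContinuousLinearMap.adjoint V) (V ((ContinuousLinearMap.adjoint V) (V x) - x))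
      = 0 := by
    have h2 := apply_eq hidem x
    simp only [ContinuousLinearMap.mul_apply] at h2
    simp only [map_sub, h2, sub_self]
  have h3 := key _ hu
  rw [map_sub, sub_eq_zero] at h3
  exact h3

include hV hVp in
theorem mul_V_eq_zero (B : H →L[ℂ] H) (hB : B * T = 0) : B * V = 0 := by
  have hTadj := adjoint_T_eq T V hV
  have hker : (LinearMap.range (ContinuousLinearMap.adjoint T : H →ₗ[ℂ] H)).topologicalClosure
      ≤ LinearMap.ker ((B * V : H →L[ℂ] H) : H →ₗ[ℂ] H) := by
    apply Submodule.topologicalClosure_minimal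
    · rintro _ ⟨u, rfl⟩
      rw [LinearMap.mem_ker]
      simp only [ContinuousLinearMap.coe_coe]
      rw [apply_eq hTadj u]
      simp only [ContinuousLinearMap.mul_apply]
      have hVS : ∀ y, V (CFC.sqrt (ContinuousLinearMap.adjoint T * T) y) = T y := by
        intro y
        conv_rhs => rw [hV]
        rw [ContinuousLinearMap.mul_apply]
      rw [hVS]
      have := apply_eq hB ((ContinuousLinearMap.adjoint V) u)
      simpa using this
    · exact ContinuousLinearMap.isClosed_ker _
  ext x
  have hVx := (apply_eq (V_mul_E T V hVp) x).symm
  simp only [ContinuousLinearMap.mul_apply] at hVx ⊢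
  rw [ContinuousLinearMap.zero_apply]
  have hmem : (ContinuousLinearMap.adjoint V) (V x)
      ∈ (LinearMap.range (ContinuousLinearMap.adjoint T : H →ₗ[ℂ] H)).topologicalClosure := by
    have h := projOn_mem (LinearMap.range (ContinuousLinearMap.adjoint T : H →ₗ[ℂ] H)).topologicalClosure
      (Submodule.isClosed_topologicalClosure _) x
    have he : (ContinuousLinearMap.adjoint V) (V x)
        = projOn (LinearMap.range (ContinuousLinearMap.adjoint T : H →ₗ[ℂ] H)).topologicalClosure
          (Submodule.isClosed_topologicalClosure _) x := by
      rw [← ContinuousLinearMap.mul_apply, hVp]; rfl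
    rw [he]; exact h
  have h4 := hker hmem
  rw [LinearMap.mem_ker] at h4
  simp only [ContinuousLinearMap.coe_coe, ContinuousLinearMap.mul_apply] at h4
  rw [hVx]
  exact h4

include hV hVp in
theorem V_mul_eq_zero (A : H →L[ℂ] H) (hA : T * A = 0) : V * A = 0 := by
  ext x
  simp only [ContinuousLinearMap.mul_apply, ContinuousLinearMap.zero_apply]
  have hAx : (projCl (ContinuousLinearMap.adjoint T)) (A x) = 0 := by
    apply projOn_eq_zero
    intro u hu
    have hle : (LinearMap.range (ContinuousLinearMap.adjoint T : H →ₗ[ℂ] H)).topologicalClosure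
        ≤ LinearMap.ker ((innerSL ℂ (A x) : H →L[ℂ] ℂ) : H →ₗ[ℂ] ℂ) := by
      apply Submodule.topologicalClosure_minimal
      · rintro _ ⟨w, rfl⟩
        rw [LinearMap.mem_ker]
        show ⟪A x, ContinuousLinearMap.adjoint T w⟫ = 0
        rw [ContinuousLinearMap.adjoint_inner_right]
        have hTAx : T (A x) = 0 := by
          have := apply_eq hA x
          simpa using this
        rw [hTAx, inner_zero_left]
      · exact ContinuousLinearMap.isClosed_ker _
    have h5 := hle hu
    rw [LinearMap.mem_ker] at h5
    have h6 : ⟪A x, u⟫ = 0 := h5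
    rw [← inner_conj_symm, h6, map_zero]
  have h1 := (apply_eq (V_mul_E T V hVp) (A x)).symm
  simp only [ContinuousLinearMap.mul_apply] at h1
  rw [h1, show (ContinuousLinearMap.adjoint V) (V (A x))
    = (ContinuousLinearMap.adjoint V * V) (A x) from rfl, hVp, hAx, map_zero]

end PI

theorem main_proj (P Q : H →L[ℂ] H)
    (hPsa : ContinuousLinearMap.adjoint P = P) (hP : P * P = P) (hQ : Q * Q = Q)
    (hPQ : ContinuousLinearMap.adjoint Q = (2 * P - 1) * Q * (2 * P - 1))
    (T V : H →L[ℂ] H) (hT : T = P * (1 - Q))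
    (hV : T = V * CFC.sqrt (ContinuousLinearMap.adjoint T * T))
    (hVp : ContinuousLinearMap.adjoint V * V = projCl (ContinuousLinearMap.adjoint T)) :
    P - V * ContinuousLinearMap.adjoint V
      = projOn (LinearMap.range (P : H →ₗ[ℂ] H) ⊓ LinearMap.range (Q : H →ₗ[ℂ] H))
        (isClosed_inf (isClosed_range_of_idem P hP) (isClosed_range_of_idem Q hQ)) := by
  have hPstar : star P = P := by rw [ContinuousLinearMap.star_eq_adjoint, hPsa]
  have hPT : P * T = T := by rw [hT, ← mul_assoc, hP]
  have hPV : P * V = V := by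
    have h0 : (1 - P) * T = 0 := by rw [sub_mul, one_mul, hPT, sub_self]
    have h1 := mul_V_eq_zero T V hV hVp (1 - P) h0
    rw [sub_mul, one_mul, sub_eq_zero] at h1
    exact h1.symm
  have hFT : V * ContinuousLinearMap.adjoint V * T = T := by
    conv_lhs => rw [hV]
    rw [show V * ContinuousLinearMap.adjoint V * (V * CFC.sqrt (ContinuousLinearMap.adjoint T * T))
        = (V * (ContinuousLinearMap.adjoint V * V)) * CFC.sqrt (ContinuousLinearMap.adjoint T * T)
      by noncomm_ring, V_mul_E T V hVp, ← hV]
  have hFsa : star (V * ContinuousLinearMap.adjoint V) = V * ContinuousLinearMap.adjoint V := by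
    rw [← ContinuousLinearMap.star_eq_adjoint, star_mul, star_star]
  set R := P - V * ContinuousLinearMap.adjoint V with hR
  have hPR : P * R = R := by
    rw [hR, mul_sub, hP, ← mul_assoc, hPV]
  have hTP : ContinuousLinearMap.adjoint T * P = ContinuousLinearMap.adjoint T := by
    have h := congrArg star hPT
    rw [star_mul, hPstar, ContinuousLinearMap.star_eq_adjoint] at h
    exact h
  have hTF : ContinuousLinearMap.adjoint T * (V * ContinuousLinearMap.adjoint V)
      = ContinuousLinearMap.adjoint T := by
    have h := congrArg star hFT
    rw [star_mul, hFsa, ContinuousLinearMap.star_eq_adjoint] at h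
    exact h
  have hT'R : ContinuousLinearMap.adjoint T * R = 0 := by
    rw [hR, mul_sub, hTP, hTF, sub_self]
  have hTadj' : ContinuousLinearMap.adjoint T = (1 - ContinuousLinearMap.adjoint Q) * P := by
    rw [hT, ← ContinuousLinearMap.star_eq_adjoint, star_mul, star_sub, star_one, hPstar,
      ContinuousLinearMap.star_eq_adjoint]
  have hQ'R : ContinuousLinearMap.adjoint Q * R = R := by
    rw [hTadj'] at hT'R
    rw [mul_assoc, hPR, sub_mul, one_mul, sub_eq_zero] at hT'R
    exact hT'R.symm
  have hJJ : (2 * P - 1) * (2 * P - 1) = 1 := by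
    have h : (2 * P - 1) * (2 * P - 1) = 4 * (P * P) - 4 * P + 1 := by noncomm_ring
    rw [h, hP]
    noncomm_ring
  have hJR : (2 * P - 1) * R = R := by
    have h : (2 * P - 1) * R = 2 * (P * R) - R := by noncomm_ring
    rw [h, hPR]
    noncomm_ring
  have hQR : Q * R = R := by
    rw [hPQ] at hQ'R
    have h : (2 * P - 1) * (Q * R) = R := by
      rw [mul_assoc ((2 * P - 1) * Q) (2 * P - 1) R, hJR, mul_assoc] at hQ'R
      exact hQ'R
    have h2 := congrArg (fun X => (2 * P - 1) * X) h
    rw [← mul_assoc, hJJ, one_mul, hJR] at h2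
    exact h2
  ext x
  set K := LinearMap.range (P : H →ₗ[ℂ] H) ⊓ LinearMap.range (Q : H →ₗ[ℂ] H) with hK
  haveI : CompleteSpace K :=
    (isClosed_inf (isClosed_range_of_idem P hP) (isClosed_range_of_idem Q hQ)).completeSpace_coe
  have hmem : R x ∈ K := by
    constructor
    · exact ⟨R x, apply_eq hPR x⟩
    · exact ⟨R x, apply_eq hQR x⟩
  have horth : ∀ w ∈ K, ⟪x - R x, w⟫ = 0 := by
    intro w hw
    obtain ⟨hwP, hwQ⟩ := hw
    obtain ⟨y, hy⟩ := hwP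
    simp only [ContinuousLinearMap.coe_coe] at hy
    have hPw : P w = w := by rw [← hy, show P (P y) = (P * P) y from rfl, hP]
    obtain ⟨z, hz⟩ := hwQ
    simp only [ContinuousLinearMap.coe_coe] at hz
    have hQw : Q w = w := by rw [← hz, show Q (Q z) = (Q * Q) z from rfl, hQ]
    have hJw : (2 * P - 1) w = w := by
      have h : (2 * P - 1) = P + P - 1 := by noncomm_ring
      rw [h]
      simp [ContinuousLinearMap.sub_apply, ContinuousLinearMap.add_apply, hPw]
    have hQ'w : ContinuousLinearMap.adjoint Q w = w := by
      rw [hPQ, show ((2 * P - 1) * Q * (2 * P - 1)) w = (2 * P - 1) (Q ((2 * P - 1) w)) from rfl,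
        hJw, hQw, hJw]
    have hT'w : ContinuousLinearMap.adjoint T w = 0 := by
      rw [hTadj', show ((1 - ContinuousLinearMap.adjoint Q) * P) w
        = P w - ContinuousLinearMap.adjoint Q (P w) from rfl, hPw, hQ'w, sub_self]
    have hV'w : ContinuousLinearMap.adjoint V w = 0 := by
      set y := ContinuousLinearMap.adjoint V w with hy'
      have hEV' : (ContinuousLinearMap.adjoint V * V) * ContinuousLinearMap.adjoint V
          = ContinuousLinearMap.adjoint V := by
        have h := congrArg star (V_mul_E T V hVp)
        rw [star_mul, star_mul,
          show star (ContinuousLinearMap.adjoint V) = V by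
            rw [← ContinuousLinearMap.star_eq_adjoint, star_star],
          ContinuousLinearMap.star_eq_adjoint] at h
        exact h
      have hy_mem : y ∈ (LinearMap.range (ContinuousLinearMap.adjoint T : H →ₗ[ℂ] H)).topologicalClosure := by
        have h1 : y = (projCl (ContinuousLinearMap.adjoint T)) y := by
          rw [← hVp, show (ContinuousLinearMap.adjoint V * V) y
            = ((ContinuousLinearMap.adjoint V * V) * ContinuousLinearMap.adjoint V) w from rfl,
            hEV']
        rw [h1]
        exact projOn_mem _ _ y
      have hle : (LinearMap.range (ContinuousLinearMap.adjoint T : H →ₗ[ℂ] H)).topologicalClosure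
          ≤ LinearMap.ker ((innerSL ℂ y : H →L[ℂ] ℂ) : H →ₗ[ℂ] ℂ) := by
        apply Submodule.topologicalClosure_minimal
        · rintro _ ⟨u, rfl⟩
          rw [LinearMap.mem_ker]
          show ⟪y, ContinuousLinearMap.adjoint T u⟫ = 0
          rw [apply_eq (adjoint_T_eq T V hV) u]
          rw [show (CFC.sqrt (ContinuousLinearMap.adjoint T * T) * ContinuousLinearMap.adjoint V) u
            = CFC.sqrt (ContinuousLinearMap.adjoint T * T) (ContinuousLinearMap.adjoint V u)
            from rfl]
          rw [hy', ContinuousLinearMap.adjoint_inner_left]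
          have hVS : ∀ v, V (CFC.sqrt (ContinuousLinearMap.adjoint T * T) v) = T v := by
            intro v
            conv_rhs => rw [hV]
            rw [ContinuousLinearMap.mul_apply]
          rw [hVS, ← ContinuousLinearMap.adjoint_inner_left, hT'w, inner_zero_left]
        · exact ContinuousLinearMap.isClosed_ker _
      have h7 := hle hy_mem
      rw [LinearMap.mem_ker] at h7
      have h8 : ⟪y, y⟫ = 0 := h7
      exact inner_self_eq_zero.mp h8
    have hxR : x - R x = (x - P x) + V (ContinuousLinearMap.adjoint V x) := by
      rw [hR]
      simp only [ContinuousLinearMap.sub_apply, ContinuousLinearMap.mul_apply]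
      abel
    rw [hxR, inner_add_left, inner_sub_left]
    rw [show ⟪P x, w⟫ = ⟪x, ContinuousLinearMap.adjoint P w⟫ by
      rw [ContinuousLinearMap.adjoint_inner_right]]
    rw [hPsa, hPw]
    rw [show ⟪V (ContinuousLinearMap.adjoint V x), w⟫
      = ⟪ContinuousLinearMap.adjoint V x, ContinuousLinearMap.adjoint V w⟫ by
      rw [ContinuousLinearMap.adjoint_inner_right]]
    rw [hV'w, inner_zero_right, sub_self, add_zero]
  exact (Submodule.eq_starProjection_of_mem_of_inner_eq_zero hmem horth).symm


/-- For a semi-harmonious quasi-projection pair `(P, Q)` with polar decompositions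
`Tᵢ = Vᵢ|Tᵢ|`: the four vanishing identities involving `P_{H₁}` and `P_{H₄}` hold, and for
all complex `c₁, c₂`, `(c₁V₁ - c₂V₂)(P - P_{H₁}) = (I - Q - P_{H₄})(c₁V₁ - c₂V₂)` iff
`cᵢVᵢTⱼ = cⱼTᵢVⱼ` for `i, j ∈ {1, 2}`. -/
theorem quasiProjectionPair_intertwining_iff (P Q : H →L[ℂ] H)
    (hPsa : ContinuousLinearMap.adjoint P = P) (hP : P * P = P) (hQ : Q * Q = Q)
    (hPQ : ContinuousLinearMap.adjoint Q = (2 * P - 1) * Q * (2 * P - 1))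
    (T₁ T₂ : H →L[ℂ] H) (hT₁ : T₁ = P * (1 - Q)) (hT₂ : T₂ = (1 - P) * Q)
    (V₁ V₂ : H →L[ℂ] H)
    (hV₁ : T₁ = V₁ * CFC.sqrt (ContinuousLinearMap.adjoint T₁ * T₁))
    (hV₁p : ContinuousLinearMap.adjoint V₁ * V₁ = projCl (ContinuousLinearMap.adjoint T₁))
    (hV₂ : T₂ = V₂ * CFC.sqrt (ContinuousLinearMap.adjoint T₂ * T₂))
    (hV₂p : ContinuousLinearMap.adjoint V₂ * V₂ = projCl (ContinuousLinearMap.adjoint T₂))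
    (P₁ P₄ : H →L[ℂ] H)
    (hP₁ : P₁ = projOn (LinearMap.range (P : H →ₗ[ℂ] H) ⊓ LinearMap.range (Q : H →ₗ[ℂ] H))
        (isClosed_inf (isClosed_range_of_idem P hP) (isClosed_range_of_idem Q hQ)))
    (hP₄ : P₄ = projOn (LinearMap.ker (P : H →ₗ[ℂ] H) ⊓ LinearMap.ker (Q : H →ₗ[ℂ] H))
        (isClosed_inf (ContinuousLinearMap.isClosed_ker P)
          (ContinuousLinearMap.isClosed_ker Q))) :
    P₁ * (P - P₁) = 0 ∧ (1 - Q - P₄) * P₁ = 0 ∧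
    P₄ * (P - P₁) = 0 ∧ (1 - Q - P₄) * P₄ = 0 ∧
    (∀ c₁ c₂ : ℂ,
      (c₁ • V₁ - c₂ • V₂) * (P - P₁) = (1 - Q - P₄) * (c₁ • V₁ - c₂ • V₂) ↔
        (c₁ • (V₁ * T₁) = c₁ • (T₁ * V₁) ∧ c₁ • (V₁ * T₂) = c₂ • (T₁ * V₂) ∧
          c₂ • (V₂ * T₁) = c₁ • (T₂ * V₁) ∧ c₂ • (V₂ * T₂) = c₂ • (T₂ * V₂))) := by
  have hPstar : star P = P := by rw [ContinuousLinearMap.star_eq_adjoint, hPsa]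
  have hMAIN1 : P - V₁ * ContinuousLinearMap.adjoint V₁ = P₁ := by
    rw [hP₁]; exact main_proj P Q hPsa hP hQ hPQ T₁ V₁ hT₁ hV₁ hV₁p
  have hP' : (1 - P) * (1 - P) = 1 - P := by
    have h : (1 - P) * (1 - P) = 1 - 2 * P + P * P := by noncomm_ring
    rw [h, hP]; noncomm_ring
  have hQ' : (1 - Q) * (1 - Q) = 1 - Q := by
    have h : (1 - Q) * (1 - Q) = 1 - 2 * Q + Q * Q := by noncomm_ring
    rw [h, hQ]; noncomm_ring
  have hPsa' : ContinuousLinearMap.adjoint (1 - P) = 1 - P := by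
    rw [← ContinuousLinearMap.star_eq_adjoint, star_sub, star_one, hPstar]
  have hJJ : (2 * P - 1) * (2 * P - 1) = 1 := by
    have h : (2 * P - 1) * (2 * P - 1) = 4 * (P * P) - 4 * P + 1 := by noncomm_ring
    rw [h, hP]; noncomm_ring
  have hPQ' : ContinuousLinearMap.adjoint (1 - Q)
      = (2 * (1 - P) - 1) * (1 - Q) * (2 * (1 - P) - 1) := by
    have h : (2 * (1 - P) - 1) * (1 - Q) * (2 * (1 - P) - 1)
        = (2 * P - 1) * (2 * P - 1) - (2 * P - 1) * Q * (2 * P - 1) := by noncomm_ring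
    rw [← ContinuousLinearMap.star_eq_adjoint, star_sub, star_one,
      ContinuousLinearMap.star_eq_adjoint, hPQ, h, hJJ]
  have hT₂' : T₂ = (1 - P) * (1 - (1 - Q)) := by rw [hT₂, sub_sub_cancel]
  have hMAIN2 : (1 - P) - V₂ * ContinuousLinearMap.adjoint V₂ = P₄ := by
    rw [hP₄, main_proj (1 - P) (1 - Q) hPsa' hP' hQ' hPQ' T₂ V₂ hT₂' hV₂ hV₂p]
    apply projOn_congr
    have e1 : LinearMap.range ((1 - P : H →L[ℂ] H) : H →ₗ[ℂ] H) = LinearMap.ker (P : H →ₗ[ℂ] H) := by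
      rw [range_eq_ker_of_idem (1 - P) hP', sub_sub_cancel]
    have e2 : LinearMap.range ((1 - Q : H →L[ℂ] H) : H →ₗ[ℂ] H) = LinearMap.ker (Q : H →ₗ[ℂ] H) := by
      rw [range_eq_ker_of_idem (1 - Q) hQ', sub_sub_cancel]
    rw [e1, e2]
  have hP₁idem : P₁ * P₁ = P₁ := by rw [hP₁]; exact projOn_idem _ _
  have hP₄idem : P₄ * P₄ = P₄ := by rw [hP₄]; exact projOn_idem _ _
  have hP₁sa : star P₁ = P₁ := by
    rw [hP₁, ContinuousLinearMap.star_eq_adjoint]; exact projOn_adjoint _ _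
  have hP₄sa : star P₄ = P₄ := by
    rw [hP₄, ContinuousLinearMap.star_eq_adjoint]; exact projOn_adjoint _ _
  have hPP₁ : P * P₁ = P₁ := by
    ext x
    have hm : P₁ x ∈ LinearMap.range (P : H →ₗ[ℂ] H) ⊓ LinearMap.range (Q : H →ₗ[ℂ] H) := by
      rw [hP₁]; exact projOn_mem _ _ x
    obtain ⟨⟨u, hu⟩, -⟩ := hm
    simp only [ContinuousLinearMap.coe_coe] at hu
    show P (P₁ x) = P₁ x
    rw [← hu, show P (P u) = (P * P) u from rfl, hP]
  have hQP₁ : Q * P₁ = P₁ := by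
    ext x
    have hm : P₁ x ∈ LinearMap.range (P : H →ₗ[ℂ] H) ⊓ LinearMap.range (Q : H →ₗ[ℂ] H) := by
      rw [hP₁]; exact projOn_mem _ _ x
    obtain ⟨-, ⟨u, hu⟩⟩ := hm
    simp only [ContinuousLinearMap.coe_coe] at hu
    show Q (P₁ x) = P₁ x
    rw [← hu, show Q (Q u) = (Q * Q) u from rfl, hQ]
  have hPP₄ : P * P₄ = 0 := by
    ext x
    have hm : P₄ x ∈ LinearMap.ker (P : H →ₗ[ℂ] H) ⊓ LinearMap.ker (Q : H →ₗ[ℂ] H) := by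
      rw [hP₄]; exact projOn_mem _ _ x
    simp only [ContinuousLinearMap.mul_apply, ContinuousLinearMap.zero_apply]
    exact hm.1
  have hQP₄ : Q * P₄ = 0 := by
    ext x
    have hm : P₄ x ∈ LinearMap.ker (P : H →ₗ[ℂ] H) ⊓ LinearMap.ker (Q : H →ₗ[ℂ] H) := by
      rw [hP₄]; exact projOn_mem _ _ x
    simp only [ContinuousLinearMap.mul_apply, ContinuousLinearMap.zero_apply]
    exact hm.2
  have hP₁P : P₁ * P = P₁ := by
    have h := congrArg star hPP₁
    rw [star_mul, hPstar, hP₁sa] at h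
    exact h
  have hP₄P : P₄ * P = 0 := by
    have h := congrArg star hPP₄
    rw [star_mul, hPstar, hP₄sa, star_zero] at h
    exact h
  have hP₄P₁ : P₄ * P₁ = 0 := by
    ext x
    simp only [ContinuousLinearMap.mul_apply, ContinuousLinearMap.zero_apply]
    rw [hP₄]
    apply projOn_eq_zero
    apply (Submodule.mem_orthogonal _ _).mpr
    intro u hu
    have hPu : P u = 0 := hu.1
    have hfix : P (P₁ x) = P₁ x := by
      have := apply_eq hPP₁ x
      simpa only [ContinuousLinearMap.mul_apply] using this
    calc ⟪u, P₁ x⟫ = ⟪u, P (P₁ x)⟫ := by rw [hfix]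
      _ = ⟪ContinuousLinearMap.adjoint P u, P₁ x⟫ :=
        (ContinuousLinearMap.adjoint_inner_left P (P₁ x) u).symm
      _ = ⟪P u, P₁ x⟫ := by rw [hPsa]
      _ = 0 := by rw [hPu, inner_zero_left]
  refine ⟨?_, ?_, ?_, ?_, ?_⟩
  · rw [mul_sub, hP₁P, hP₁idem, sub_self]
  · rw [sub_mul, sub_mul, one_mul, hQP₁, hP₄P₁, sub_self, sub_zero]
  · rw [mul_sub, hP₄P, hP₄P₁, sub_zero]
  · rw [sub_mul, sub_mul, one_mul, hQP₄, hP₄idem, sub_zero, sub_self]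
  · intro c₁ c₂
    have hPT₁ : P * T₁ = T₁ := by rw [hT₁, ← mul_assoc, hP]
    have hP1P : P * (1 - P) = 0 := by rw [mul_sub, mul_one, hP, sub_self]
    have hPT₂ : P * T₂ = 0 := by rw [hT₂, ← mul_assoc, hP1P, zero_mul]
    have h1QQ : (1 - Q) * Q = 0 := by rw [sub_mul, one_mul, hQ, sub_self]
    have hT₁Q : T₁ * Q = 0 := by rw [hT₁, mul_assoc, h1QQ, mul_zero]
    have hT₂Q : T₂ * Q = T₂ := by rw [hT₂, mul_assoc, hQ]
    have hPmT : P = T₁ - T₂ + Q := by rw [hT₁, hT₂]; noncomm_ring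
    have hPQdiff : P - Q = T₁ - T₂ := by rw [hT₁, hT₂]; noncomm_ring
    have hPV₁ : P * V₁ = V₁ := by
      have h0 : (1 - P) * T₁ = 0 := by rw [sub_mul, one_mul, hPT₁, sub_self]
      have h1 := mul_V_eq_zero T₁ V₁ hV₁ hV₁p (1 - P) h0
      rw [sub_mul, one_mul, sub_eq_zero] at h1
      exact h1.symm
    have hPV₂ : P * V₂ = 0 := mul_V_eq_zero T₂ V₂ hV₂ hV₂p P hPT₂
    have hV₁Q : V₁ * Q = 0 := V_mul_eq_zero T₁ V₁ hV₁ hV₁p Q hT₁Q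
    have hV₂Q : V₂ * Q = V₂ := by
      have h0 : T₂ * (1 - Q) = 0 := by rw [mul_sub, mul_one, hT₂Q, sub_self]
      have h1 := V_mul_eq_zero T₂ V₂ hV₂ hV₂p (1 - Q) h0
      rw [mul_sub, mul_one, sub_eq_zero] at h1
      exact h1.symm
    have hT₁P₁ : T₁ * P₁ = 0 := by
      rw [hT₁, mul_assoc, show (1 - Q) * P₁ = 0 by rw [sub_mul, one_mul, hQP₁, sub_self],
        mul_zero]
    have hT₂P₁ : T₂ * P₁ = 0 := by
      rw [hT₂, mul_assoc, hQP₁, sub_mul, one_mul, hPP₁, sub_self]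
    have hV₁P₁ : V₁ * P₁ = 0 := V_mul_eq_zero T₁ V₁ hV₁ hV₁p P₁ hT₁P₁
    have hV₂P₁ : V₂ * P₁ = 0 := V_mul_eq_zero T₂ V₂ hV₂ hV₂p P₁ hT₂P₁
    have hV₂E : V₂ * (ContinuousLinearMap.adjoint V₂ * V₂) = V₂ := V_mul_E T₂ V₂ hV₂p
    have hV₂'P : ContinuousLinearMap.adjoint V₂ * P = 0 := by
      have h := congrArg star hPV₂
      rw [star_mul, hPstar, star_zero, ContinuousLinearMap.star_eq_adjoint] at h
      exact h
    have hV₂'V₁ : ContinuousLinearMap.adjoint V₂ * V₁ = 0 := by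
      rw [← hPV₁, ← mul_assoc, hV₂'P, zero_mul]
    have hV₁P : V₁ * P = V₁ * T₁ - V₁ * T₂ := by
      conv_lhs => rw [hPmT]
      rw [mul_add, mul_sub, hV₁Q, add_zero]
    have hV₂P : V₂ * P = V₂ * T₁ - V₂ * T₂ + V₂ := by
      conv_lhs => rw [hPmT]
      rw [mul_add, mul_sub, hV₂Q]
    have idL : (c₁ • V₁ - c₂ • V₂) * (P - P₁)
        = c₁ • (V₁ * T₁) - c₁ • (V₁ * T₂) - c₂ • (V₂ * T₁) + c₂ • (V₂ * T₂) - c₂ • V₂ := by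
      simp only [sub_mul, smul_mul_assoc, mul_sub]
      rw [hV₁P, hV₂P, hV₁P₁, hV₂P₁]
      module
    have idR : (1 - Q - P₄) * (c₁ • V₁ - c₂ • V₂)
        = c₁ • (T₁ * V₁) - c₁ • (T₂ * V₁) - c₂ • (T₁ * V₂) + c₂ • (T₂ * V₂) - c₂ • V₂ := by
      have hdec : (1 : H →L[ℂ] H) - Q - P₄
          = V₂ * ContinuousLinearMap.adjoint V₂ + (T₁ - T₂) := by
        rw [← hMAIN2, ← hPQdiff]; abel
      have hFV₁ : (V₂ * ContinuousLinearMap.adjoint V₂) * V₁ = 0 := by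
        rw [mul_assoc, hV₂'V₁, mul_zero]
      have hFV₂ : (V₂ * ContinuousLinearMap.adjoint V₂) * V₂ = V₂ := by
        rw [mul_assoc]; exact hV₂E
      rw [hdec]
      simp only [add_mul, sub_mul, mul_sub, mul_smul_comm, smul_mul_assoc, hFV₁, hFV₂, smul_zero]
      module
    rw [idL, idR]
    constructor
    · intro hE
      have hXY : c₁ • (V₁ * T₁) - c₁ • (V₁ * T₂) - c₂ • (V₂ * T₁) + c₂ • (V₂ * T₂)
          = c₁ • (T₁ * V₁) - c₁ • (T₂ * V₁) - c₂ • (T₁ * V₂) + c₂ • (T₂ * V₂) := by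
        linear_combination (norm := module) hE
      have e1 : P * (V₁ * T₁) = V₁ * T₁ := by rw [← mul_assoc, hPV₁]
      have e2 : P * (V₁ * T₂) = V₁ * T₂ := by rw [← mul_assoc, hPV₁]
      have e3 : P * (V₂ * T₁) = 0 := by rw [← mul_assoc, hPV₂, zero_mul]
      have e4 : P * (V₂ * T₂) = 0 := by rw [← mul_assoc, hPV₂, zero_mul]
      have e5 : P * (T₁ * V₁) = T₁ * V₁ := by rw [← mul_assoc, hPT₁]
      have e6 : P * (T₂ * V₁) = 0 := by rw [← mul_assoc, hPT₂, zero_mul]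
      have e7 : P * (T₁ * V₂) = T₁ * V₂ := by rw [← mul_assoc, hPT₁]
      have e8 : P * (T₂ * V₂) = 0 := by rw [← mul_assoc, hPT₂, zero_mul]
      have hA : c₁ • (V₁ * T₁) - c₁ • (V₁ * T₂) = c₁ • (T₁ * V₁) - c₂ • (T₁ * V₂) := by
        have h := congrArg (fun Z => P * Z) hXY
        simp only [mul_add, mul_sub, mul_smul_comm, e1, e2, e3, e4, e5, e6, e7, e8,
          smul_zero] at h
        linear_combination (norm := module) h
      have f1 : (V₁ * T₁) * Q = 0 := by rw [mul_assoc, hT₁Q, mul_zero]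
      have f2 : (V₁ * T₂) * Q = V₁ * T₂ := by rw [mul_assoc, hT₂Q]
      have f3 : (T₁ * V₁) * Q = 0 := by rw [mul_assoc, hV₁Q, mul_zero]
      have f4 : (T₁ * V₂) * Q = T₁ * V₂ := by rw [mul_assoc, hV₂Q]
      have h2c : c₁ • (V₁ * T₂) = c₂ • (T₁ * V₂) := by
        have h := congrArg (fun Z => Z * Q) hA
        simp only [sub_mul, smul_mul_assoc, f1, f2, f3, f4, smul_zero] at h
        linear_combination (norm := module) -h
      have h1c : c₁ • (V₁ * T₁) = c₁ • (T₁ * V₁) := by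
        linear_combination (norm := module) hA + h2c
      have hB : c₂ • (V₂ * T₁) - c₂ • (V₂ * T₂) = c₁ • (T₂ * V₁) - c₂ • (T₂ * V₂) := by
        linear_combination (norm := module) hA - hXY
      have g1 : (V₂ * T₁) * Q = 0 := by rw [mul_assoc, hT₁Q, mul_zero]
      have g2 : (V₂ * T₂) * Q = V₂ * T₂ := by rw [mul_assoc, hT₂Q]
      have g3 : (T₂ * V₁) * Q = 0 := by rw [mul_assoc, hV₁Q, mul_zero]
      have g4 : (T₂ * V₂) * Q = T₂ * V₂ := by rw [mul_assoc, hV₂Q]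
      have h4c : c₂ • (V₂ * T₂) = c₂ • (T₂ * V₂) := by
        have h := congrArg (fun Z => Z * Q) hB
        simp only [sub_mul, smul_mul_assoc, g1, g2, g3, g4, smul_zero] at h
        linear_combination (norm := module) -h
      have h3c : c₂ • (V₂ * T₁) = c₁ • (T₂ * V₁) := by
        linear_combination (norm := module) hB + h4c
      exact ⟨h1c, h2c, h3c, h4c⟩
    · rintro ⟨h1, h2, h3, h4⟩
      linear_combination (norm := module) h1 - h2 - h3 + h4
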